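/- arXiv:1010.5805 — 5 statements merged into one kernel-verified Lean document; each statement's English description precedes it below -/
import Mathlib

section
/- (Gowers–Cauchy–Schwarz inequality for box norms) Let e = {e_1,...,e_d} be a basis of Z_N^d. For any family of real-valued functions (f_ω)_{ω ∈ {0,1}^d} on Z_N^d, one has E_{x ∈ Z_N^d, t ∈ Z_N^d} ∏_{ω ∈ {0,1}^d} f_ω(x + ω·t·e) ≤ ∏_{ω ∈ {0,1}^d} ||f_ω||_{□(e)^d}. -/
/-!
Write `⟨g⟩ = ∑ x t, ∏ ω, g ω (x + ω·t·e)`. Splitting off a coordinate `a`, the product factors as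
`A(x) B(x + t_a e_a)`, with `A`, `B` the products over the faces `ω a = 0` and `ω a = 1`. Averaging
over the translates `x ↦ x + u e_a` turns `∑ x, ∑ s, A(x) B(x + s e_a)` into
`|R|⁻¹ ∑ x, (∑ u, A(x + u e_a)) (∑ u, B(x + u e_a))`, so Cauchy–Schwarz gives `⟨g⟩² ≤ ⟨g₀⟩⟨g₁⟩`,
where `g_b` copies face `b` onto both faces, and the same identity shows `⟨g_b⟩ ≥ 0`.
Iterating over all coordinates gives `⟨g⟩^(2^d) ≤ ∏ ω, ⟨g ω, …, g ω⟩`.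
-/

open Finset Function

section Cube

variable {ι : Type*} [DecidableEq ι]

theorem update_funSplitAt_symm {β : Type*} (a : ι) (b c : β) (ω : {j // j ≠ a} → β) :
    update ((Equiv.funSplitAt a β).symm (b, ω)) a c = (Equiv.funSplitAt a β).symm (c, ω) := by
  ext j
  by_cases h : j = a
  · subst h; simp
  · simp [h]

variable [Fintype ι]

@[to_additive]
theorem prod_funSplitAt_symm {β M : Type*} [Fintype β] [CommMonoid M] (a : ι)
    (φ : (ι → β) → M) :
    ∏ σ, φ σ = ∏ b, ∏ ω, φ ((Equiv.funSplitAt a β).symm (b, ω)) := by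
  rw [← (Equiv.funSplitAt a β).symm.prod_comp, Fintype.prod_prod_type]

theorem prod_update_false_mul_prod_update_true {M : Type*} [CommMonoid M]
    (h : (ι → Bool) → M) (a : ι) :
    (∏ σ, h (update σ a false)) * ∏ σ, h (update σ a true) = (∏ σ, h σ) ^ 2 := by
  simp only [prod_funSplitAt_symm a, update_funSplitAt_symm, prod_const, card_univ,
    Fintype.card_bool, Fintype.prod_bool]
  rw [mul_pow, mul_comm]

theorem pow_two_pow_card_le_prod_of_sq_le_mul {X : Type*} (F : ((ι → Bool) → X) → ℝ)
    (hsq : ∀ a (g : (ι → Bool) → X),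
      F g ^ 2 ≤ F (fun ω => g (update ω a false)) * F (fun ω => g (update ω a true)))
    (hnonneg : ∀ a b (g : (ι → Bool) → X), 0 ≤ F (fun ω => g (update ω a b)))
    (g : (ι → Bool) → X) :
    F g ^ 2 ^ Fintype.card ι ≤ ∏ σ, F (fun _ => g σ) := by
  suffices key : ∀ (s : Finset ι) g,
      F g ^ 2 ^ Fintype.card ι ≤ ∏ σ, F (fun ω => g (s.piecewise σ ω)) by
    simpa only [piecewise_univ] using key univ g
  intro s
  induction s using Finset.induction_on with
  | empty =>
    intro g
    simp
  | insert a s ha ih =>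
    intro g
    set h : (ι → Bool) → ℝ := fun σ => F (fun ω => g ((insert a s).piecewise σ ω))
    have h_update (σ : ι → Bool) (b : Bool) :
        h (update σ a b) = F (fun ω => g (update (s.piecewise σ ω) a b)) := by
      simp only [h, piecewise_insert, update_self]
      congr! 4 with ω
      exact s.piecewise_congr (fun i hi => update_of_ne (ne_of_mem_of_not_mem hi ha) ..)
        fun _ _ => rfl
    have h_nonneg (σ : ι → Bool) : 0 ≤ h σ := by
      simp only [h, piecewise_insert, update_piecewise_of_notMem _ _ _ ha]
      exact hnonneg a (σ a) fun ω => g (s.piecewise σ ω)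
    refine le_of_sq_le_sq ?_ (prod_nonneg fun σ _ => h_nonneg σ)
    calc (F g ^ 2 ^ Fintype.card ι) ^ 2 = (F g ^ 2) ^ 2 ^ Fintype.card ι := by ring
      _ ≤ (F (fun ω => g (update ω a false)) * F (fun ω => g (update ω a true))) ^
            2 ^ Fintype.card ι := pow_le_pow_left₀ (sq_nonneg _) (hsq a g) _
      _ ≤ (∏ σ, h (update σ a false)) * ∏ σ, h (update σ a true) := by
        simp only [mul_pow, h_update]
        exact mul_le_mul (ih _) (ih _) (pow_nonneg (hnonneg a true g) _)
          (prod_nonneg fun σ _ => h_update σ false ▸ h_nonneg _)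
      _ = (∏ σ, h σ) ^ 2 := prod_update_false_mul_prod_update_true h a

end Cube

theorem div_le_prod_div_rpow_of_pow_card_le {κ : Type*} [Fintype κ] [Nonempty κ] {S c : ℝ}
    {T : κ → ℝ} (hT : ∀ i, 0 ≤ T i) (hc : 0 < c) (h : S ^ Fintype.card κ ≤ ∏ i, T i) :
    S / c ≤ ∏ i, (T i / c) ^ ((1 : ℝ) / Fintype.card κ) := by
  have hnorm : (S / c) ^ Fintype.card κ ≤ ∏ i, T i / c := by
    rw [div_pow, prod_div_distrib, prod_const, card_univ]
    exact div_le_div_of_nonneg_right h (by positivity)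
  rw [Real.finsetProd_rpow _ _ fun i _ => div_nonneg (hT i) hc.le]
  rcases le_or_gt (S / c) 0 with hneg | hpos
  · exact hneg.trans (Real.rpow_nonneg (prod_nonneg fun i _ => div_nonneg (hT i) hc.le) _)
  · calc S / c = ((S / c) ^ Fintype.card κ) ^ ((1 : ℝ) / Fintype.card κ) := by
          rw [one_div, Real.pow_rpow_inv_natCast hpos.le Fintype.card_ne_zero]
      _ ≤ _ := Real.rpow_le_rpow (by positivity) hnorm (by positivity)

section BoxInner

variable {ι G R : Type*} [Fintype ι] [DecidableEq ι] [Ring R] [AddCommGroup G] [Module R G]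

def boxFace (e : ι → G) (g : (ι → Bool) → G → ℝ) (a : ι) (b : Bool) (τ : {j // j ≠ a} → R)
    (y : G) : ℝ :=
  ∏ ω : {j // j ≠ a} → Bool,
    g ((Equiv.funSplitAt a Bool).symm (b, ω)) (y + ∑ j, if ω j then τ j • e j else 0)

theorem boxFace_comp_update (e : ι → G) (g : (ι → Bool) → G → ℝ) (a : ι) (b c : Bool) :
    boxFace e (fun ω => g (update ω a c)) a b = boxFace (R := R) e g a c := by
  funext τ y
  simp only [boxFace, update_funSplitAt_symm]

variable (R) [Fintype R] [Fintype G]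

theorem card_mul_sum_sum_mul_add_smul (A B : G → ℝ) (v : G) :
    Fintype.card R * ∑ x, ∑ s : R, A x * B (x + s • v) =
      ∑ x, (∑ u : R, A (x + u • v)) * ∑ u : R, B (x + u • v) := by
  calc Fintype.card R * ∑ x, ∑ s : R, A x * B (x + s • v)
      = ∑ u : R, ∑ x, ∑ s : R, A (x + u • v) * B (x + (u + s) • v) := by
        rw [← card_univ, ← nsmul_eq_mul, ← sum_const]
        refine sum_congr rfl fun u _ => ?_
        rw [← Equiv.sum_comp (Equiv.addRight (u • v))]
        simp only [Equiv.coe_addRight, add_smul, add_assoc]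
    _ = ∑ x, (∑ u : R, A (x + u • v)) * ∑ u : R, B (x + u • v) := by
        rw [sum_comm]
        refine sum_congr rfl fun x _ => ?_
        rw [sum_mul_sum]
        refine sum_congr rfl fun u _ => ?_
        exact Equiv.sum_comp (Equiv.addLeft u) fun w => A (x + u • v) * B (x + w • v)

def boxInner (e : ι → G) (g : (ι → Bool) → G → ℝ) : ℝ :=
  ∑ x, ∑ t : ι → R, ∏ ω : ι → Bool, g ω (x + ∑ i, if ω i then t i • e i else 0)

theorem boxInner_eq_sum_boxFace (e : ι → G) (g : (ι → Bool) → G → ℝ) (a : ι) :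
    boxInner R e g = ∑ τ : {j // j ≠ a} → R, ∑ x, ∑ s : R,
      boxFace e g a false τ x * boxFace e g a true τ (x + s • e a) := by
  have hshift (b : Bool) (ω : {j // j ≠ a} → Bool) (s : R) (τ : {j // j ≠ a} → R) :
      ∑ i, (if (Equiv.funSplitAt a Bool).symm (b, ω) i then
          (Equiv.funSplitAt a R).symm (s, τ) i • e i else 0) =
        (if b then s • e a else 0) + ∑ j, if ω j then τ j • e j else 0 := by
    rw [Fintype.sum_eq_add_sum_subtype_ne _ a]
    congr 1
    · simp
    · exact sum_congr rfl fun j _ => by simp [j.2]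
  have hpoint (x : G) (s : R) (τ : {j // j ≠ a} → R) :
      ∏ ω, g ω (x + ∑ i, if ω i then (Equiv.funSplitAt a R).symm (s, τ) i • e i else 0) =
        boxFace e g a false τ x * boxFace e g a true τ (x + s • e a) := by
    rw [prod_funSplitAt_symm a, Fintype.prod_bool, mul_comm]
    simp only [boxFace, hshift, Bool.false_eq_true, if_true, if_false, zero_add, add_assoc]
  simp only [boxInner, sum_funSplitAt_symm (β := R) a, hpoint]
  exact (sum_congr rfl fun _ _ => sum_comm).trans sum_comm

theorem card_mul_boxInner_eq (e : ι → G) (g : (ι → Bool) → G → ℝ) (a : ι) :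
    Fintype.card R * boxInner R e g = ∑ τ : {j // j ≠ a} → R, ∑ x,
      (∑ u : R, boxFace e g a false τ (x + u • e a)) *
        ∑ u : R, boxFace e g a true τ (x + u • e a) := by
  rw [boxInner_eq_sum_boxFace R e g a, mul_sum]
  simp only [card_mul_sum_sum_mul_add_smul]

theorem boxInner_comp_update_nonneg (e : ι → G) (g : (ι → Bool) → G → ℝ) (a : ι) (b : Bool) :
    0 ≤ boxInner R e (fun ω => g (update ω a b)) := by
  have hR : (0 : ℝ) < Fintype.card R := Nat.cast_pos.mpr Fintype.card_pos
  refine nonneg_of_mul_nonneg_right ?_ hR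
  rw [card_mul_boxInner_eq R e _ a]
  simp only [boxFace_comp_update]
  exact sum_nonneg fun τ _ => sum_nonneg fun x _ => mul_self_nonneg _

theorem boxInner_sq_le (e : ι → G) (g : (ι → Bool) → G → ℝ) (a : ι) :
    boxInner R e g ^ 2 ≤ boxInner R e (fun ω => g (update ω a false)) *
      boxInner R e (fun ω => g (update ω a true)) := by
  have hR : (0 : ℝ) < Fintype.card R := Nat.cast_pos.mpr Fintype.card_pos
  refine le_of_mul_le_mul_left ?_ (pow_pos hR 2)
  calc (Fintype.card R : ℝ) ^ 2 * boxInner R e g ^ 2 = (Fintype.card R * boxInner R e g) ^ 2 := by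
        ring
    _ ≤ (Fintype.card R * boxInner R e (fun ω => g (update ω a false))) *
          (Fintype.card R * boxInner R e (fun ω => g (update ω a true))) := by
        simp only [card_mul_boxInner_eq R e _ a, boxFace_comp_update, ← Fintype.sum_prod_type']
        simpa only [sq] using sum_mul_sq_le_sq_mul_sq univ _ _
    _ = _ := by ring

theorem boxInner_pow_le_prod (e : ι → G) (g : (ι → Bool) → G → ℝ) :
    boxInner R e g ^ 2 ^ Fintype.card ι ≤ ∏ ω, boxInner R e (fun _ => g ω) :=
  pow_two_pow_card_le_prod_of_sq_le_mul (boxInner R e) (fun a g => boxInner_sq_le R e g a)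
    (fun a b g => boxInner_comp_update_nonneg R e g a b) g

theorem boxInner_div_le_prod_rpow (e : ι → G) (g : (ι → Bool) → G → ℝ) {c : ℝ} (hc : 0 < c) :
    boxInner R e g / c ≤
      ∏ ω, (boxInner R e (fun _ => g ω) / c) ^ ((1 : ℝ) / 2 ^ Fintype.card ι) := by
  cases isEmpty_or_nonempty ι with
  | inl _ =>
    simp only [Fintype.card_eq_zero, pow_zero, div_one, Real.rpow_one, Fintype.prod_unique]
    refine le_of_eq (congrArg (boxInner R e · / c) ?_)
    exact funext fun ω => congrArg g (Subsingleton.elim _ _)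
  | inr hι =>
    obtain ⟨a⟩ := hι
    have hcard : ((Fintype.card (ι → Bool) : ℕ) : ℝ) = 2 ^ Fintype.card ι := by simp
    rw [← hcard]
    refine div_le_prod_div_rpow_of_pow_card_le (fun ω => ?_) hc ?_
    · exact boxInner_comp_update_nonneg R e (fun _ => g ω) a false
    · simpa only [Fintype.card_fun, Fintype.card_bool] using boxInner_pow_le_prod R e g

end BoxInner

theorem box_gowers_cauchy_schwarz_general (N d : ℕ) [NeZero N]
    (e : Fin d → (Fin d → ZMod N))
    (f : (Fin d → Bool) → (Fin d → ZMod N) → ℝ) :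
    (∑ x : Fin d → ZMod N, ∑ t : Fin d → ZMod N,
        ∏ ω : Fin d → Bool,
          f ω (x + ∑ i : Fin d, if ω i then t i • e i else 0)) /
      (N : ℝ) ^ (2 * d)
    ≤ ∏ ω : Fin d → Bool,
        ((∑ x : Fin d → ZMod N, ∑ t : Fin d → ZMod N,
            ∏ ω' : Fin d → Bool,
              f ω (x + ∑ i : Fin d, if ω' i then t i • e i else 0)) /
          (N : ℝ) ^ (2 * d)) ^ ((1 : ℝ) / 2 ^ d) := by
  have hN : (0 : ℝ) < (N : ℝ) ^ (2 * d) := pow_pos (Nat.cast_pos.mpr (NeZero.pos N)) _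
  have h := boxInner_div_le_prod_rpow (ZMod N) e f hN
  rwa [Fintype.card_fin] at h

/-- Gowers–Cauchy–Schwarz inequality for the box norm with respect
to a basis `e` of `Z_N^d`. -/
theorem box_gowers_cauchy_schwarz (N d : ℕ) [NeZero N] (hN : N.Prime)
    (e : Fin d → (Fin d → ZMod N))
    (he : LinearIndependent (ZMod N) e)
    (hspan : Submodule.span (ZMod N) (Set.range e) = ⊤)
    (f : (Fin d → Bool) → (Fin d → ZMod N) → ℝ) :
    (∑ x : Fin d → ZMod N, ∑ t : Fin d → ZMod N,
        ∏ ω : Fin d → Bool,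
          f ω (x + ∑ i : Fin d, if ω i then t i • e i else 0)) /
      (N : ℝ) ^ (2 * d)
    ≤ ∏ ω : Fin d → Bool,
        ((∑ x : Fin d → ZMod N, ∑ t : Fin d → ZMod N,
            ∏ ω' : Fin d → Bool,
              f ω (x + ∑ i : Fin d, if ω' i then t i • e i else 0)) /
          (N : ℝ) ^ (2 * d)) ^ ((1 : ℝ) / 2 ^ d) :=
  box_gowers_cauchy_schwarz_general N d e f
end

section
/- For any set of l vectors e = {e_1,...,e_l} ⊆ ℤ^d in general position, there exists a set e' = {e'_1,...,e'_{l+d}} ⊆ ℤ^{d+l} that is simultaneously a basis of ℝ^{d+l} and in general position, such that e'_i = (e_i, f_i) for 1 ≤ i ≤ l for some linearly independent f_1,...,f_l ∈ ℤ^l; consequently, if a set A' = A × B ⊆ ℤ^{d+l} contains an affine copy x' + t·e' of e' ∪ {0} with t ≠ 0, then A contains an affine copy x + t·e of e ∪ {0}. -/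
open Finset Matrix

lemma aux_vdm_det (n : ℕ) (a : ℤ) (ha : a ≠ 0) :
    (Matrix.of fun j c : Fin n => a * ((j : ℤ) + 1) ^ ((c : ℕ) + 1)).det ≠ 0 := by
  have hrw : (Matrix.of fun j c : Fin n => a * ((j : ℤ) + 1) ^ ((c : ℕ) + 1)) =
      Matrix.of fun j c : Fin n => (a * ((j : ℤ) + 1)) *
        (Matrix.vandermonde (fun j : Fin n => (j : ℤ) + 1)) j c := by
    ext j c
    simp only [Matrix.of_apply, Matrix.vandermonde_apply, pow_succ]
    ring
  rw [hrw, Matrix.det_mul_column, Matrix.det_vandermonde]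
  refine mul_ne_zero (Finset.prod_ne_zero_iff.2 fun j _ => mul_ne_zero ha (by positivity)) ?_
  refine Finset.prod_ne_zero_iff.2 fun i _ => Finset.prod_ne_zero_iff.2 fun j hj => ?_
  have h1 : i < j := Finset.mem_Ioi.1 hj
  have h2 : (i : ℤ) < (j : ℤ) := by exact_mod_cast (Fin.lt_def.1 h1)
  intro hc; omega

lemma aux_rows_li {n : Type*} [Fintype n] [DecidableEq n] (A : Matrix n n ℤ)
    (h : A.det ≠ 0) :
    LinearIndependent ℝ (fun i => fun j => ((A i j : ℝ))) := by
  have hm := (Int.castRingHom ℝ).map_det A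
  simp only [RingHom.mapMatrix_apply] at hm
  have hdet : (A.map (Int.castRingHom ℝ)).det ≠ 0 := by
    rw [← hm]; simpa using h
  exact Matrix.linearIndependent_rows_iff_isUnit (K := ℝ) (A := A.map (Int.castRingHom ℝ))
    |>.2 ((Matrix.isUnit_iff_isUnit_det _).2 (isUnit_iff_ne_zero.2 hdet))

lemma aux_cast_ne {p : ℕ} (a : ℤ) (h0 : a ≠ 0) (hlt : a.natAbs < p) :
    ((a : ZMod p) ≠ 0) := by
  intro hc
  rw [ZMod.intCast_zmod_eq_zero_iff_dvd] at hc
  have h2 : p ∣ a.natAbs := by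
    have := Int.natAbs_dvd_natAbs.2 hc
    simpa using this
  have := Nat.le_of_dvd (Nat.pos_of_ne_zero (Int.natAbs_ne_zero.2 h0)) h2
  omega

lemma aux_pow_ne {n : ℕ} {j k : Fin n} (h : j ≠ k) (m : ℕ) :
    ((j : ℤ) + 1) ^ (m + 1) ≠ ((k : ℤ) + 1) ^ (m + 1) := by
  have key : ∀ {x y : Fin n}, x < y →
      ((x : ℤ) + 1) ^ (m + 1) < ((y : ℤ) + 1) ^ (m + 1) := by
    intro x y hxy
    refine pow_lt_pow_left₀ ?_ (by positivity) (Nat.succ_ne_zero m)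
    have : (x : ℤ) < (y : ℤ) := by exact_mod_cast (Fin.lt_def.1 hxy)
    omega
  rcases h.lt_or_gt with hlt | hlt
  · exact ne_of_lt (key hlt)
  · exact ne_of_gt (key hlt)

lemma aux_pow_one_le {n : ℕ} (k : Fin n) (m : ℕ) :
    (1 : ℤ) ≤ ((k : ℤ) + 1) ^ (m + 1) := by
  have : (0 : ℤ) < ((k : ℤ) + 1) ^ (m + 1) := by positivity
  omega

/-- any set `e` of `l` vectors of `ℤ^d` in general position extends
to a set `e'` of `l+d` vectors of `ℤ^{d+l}` (coordinates indexed by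
`Fin d ⊕ Fin l`) which is a basis of `ℝ^{d+l}` in general position, with
`e'_i = (e_i, f_i)` for `i < l` and `f_1, ..., f_l` linearly independent;
consequently any constellation of `e'` inside a product set `A × B` projects to
a constellation of `e` inside `A`. -/
theorem general_position_embedding (d l : ℕ)
    (e : Fin l → (Fin d → ℤ))
    (hgen : ∀ i : Fin d,
      (∀ j : Fin l, e j i ≠ 0) ∧
      (∀ j k : Fin l, j ≠ k → e j i ≠ e k i)) :
    ∃ (f : Fin l → (Fin l → ℤ)) (e' : Fin (l + d) → (Fin d ⊕ Fin l → ℤ)),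
      LinearIndependent ℝ (fun j => fun c => ((f j c : ℝ))) ∧
      (∀ i : Fin l, e' (Fin.castAdd d i) = Sum.elim (e i) (f i)) ∧
      LinearIndependent ℝ (fun j => fun c => ((e' j c : ℝ))) ∧
      (∀ c : Fin d ⊕ Fin l,
        (∀ j : Fin (l + d), e' j c ≠ 0) ∧
        (∀ j k : Fin (l + d), j ≠ k → e' j c ≠ e' k c)) ∧
      (∀ (A : Set (Fin d → ℤ)) (B : Set (Fin l → ℤ))
        (x : Fin d → ℤ) (y : Fin l → ℤ) (t : ℤ), t ≠ 0 →
        (x ∈ A ∧ y ∈ B) →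
        (∀ j : Fin (l + d),
          (fun c => x c + t * e' j (Sum.inl c)) ∈ A ∧
          (fun c => y c + t * e' j (Sum.inr c)) ∈ B) →
        x ∈ A ∧ ∀ i : Fin l, (fun c => x c + t * e i c) ∈ A) := by
  classical
  -- bound on entries of e
  set Mb : ℕ := (Finset.univ.sup fun q : Fin l × Fin d => (e q.1 q.2).natAbs) + 1 with hMb
  have hMe : ∀ (j : Fin l) (i : Fin d), (e j i).natAbs < Mb := by
    intro j i
    have h := Finset.le_sup (f := fun q : Fin l × Fin d => (e q.1 q.2).natAbs)
      (Finset.mem_univ (j, i))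
    simp only at h
    omega
  -- the four blocks
  set F : Matrix (Fin l) (Fin l) ℤ :=
    Matrix.of (fun j c => ((j : ℤ) + 1) ^ ((c : ℕ) + 1)) with hFdef
  set G : Matrix (Fin d) (Fin d) ℤ :=
    Matrix.of (fun k i => (Mb : ℤ) * ((k : ℤ) + 1) ^ ((i : ℕ) + 1)) with hGdef
  have hF : F.det ≠ 0 := by
    have := aux_vdm_det l 1 one_ne_zero
    simpa [hFdef, one_mul] using this
  have hG : G.det ≠ 0 := aux_vdm_det d (Mb : ℤ) (Int.natCast_ne_zero.mpr (by omega))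
  -- a big prime
  obtain ⟨p, hpl, hpp⟩ :=
    Nat.exists_infinite_primes (l ^ l + F.det.natAbs + G.det.natAbs + 1)
  haveI : Fact p.Prime := ⟨hpp⟩
  set H : Matrix (Fin d) (Fin l) ℤ :=
    Matrix.of (fun k c => (p : ℤ) * ((k : ℤ) + 1) ^ ((c : ℕ) + 1)) with hHdef
  set E : Matrix (Fin l) (Fin d) ℤ := Matrix.of (fun j i => e j i) with hEdef
  set N : Matrix (Fin l ⊕ Fin d) (Fin l ⊕ Fin d) ℤ := Matrix.fromBlocks F E H G with hNdef
  -- determinant of N is nonzero (mod p argument)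
  have hN : N.det ≠ 0 := by
    intro hc
    set φ := Int.castRingHom (ZMod p) with hφ
    have hHmap : H.map φ = 0 := by
      ext k c
      simp [hHdef, hφ, Matrix.map_apply]
    have hmapN : N.map φ = Matrix.fromBlocks (F.map φ) (E.map φ) 0 (G.map φ) := by
      rw [hNdef, Matrix.fromBlocks_map, hHmap]
    have hdet1 : (N.map φ).det = (F.map φ).det * (G.map φ).det := by
      rw [hmapN, Matrix.det_fromBlocks_zero₂₁]
    have hFd : (F.map φ).det = ((F.det : ZMod p)) := by
      have := φ.map_det F
      simp only [RingHom.mapMatrix_apply] at this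
      rw [← this]; rfl
    have hGd : (G.map φ).det = ((G.det : ZMod p)) := by
      have := φ.map_det G
      simp only [RingHom.mapMatrix_apply] at this
      rw [← this]; rfl
    have hNd : (N.map φ).det = ((N.det : ZMod p)) := by
      have := φ.map_det N
      simp only [RingHom.mapMatrix_apply] at this
      rw [← this]; rfl
    have hFne : ((F.det : ZMod p)) ≠ 0 := aux_cast_ne F.det hF (by omega)
    have hGne : ((G.det : ZMod p)) ≠ 0 := aux_cast_ne G.det hG (by omega)
    have : ((N.det : ZMod p)) ≠ 0 := by
      rw [← hNd, hdet1, hFd, hGd]; exact mul_ne_zero hFne hGne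
    exact this (by rw [hc]; simp)
  -- definitions of f and e'
  set σ : Fin d ⊕ Fin l ≃ Fin l ⊕ Fin d := Equiv.sumComm (Fin d) (Fin l) with hσ
  refine ⟨fun j c => F j c, fun j c => N (finSumFinEquiv.symm j) (σ c), ?_, ?_, ?_, ?_, ?_⟩
  · exact aux_rows_li F hF
  · -- e' (castAdd d i) = Sum.elim (e i) (f i)
    intro i
    funext c
    rcases c with a | b
    · simp [hNdef, hσ, hEdef, finSumFinEquiv_symm_apply_castAdd]
    · simp [hNdef, hσ, finSumFinEquiv_symm_apply_castAdd]
  · -- linear independence of e'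
    have li := aux_rows_li N hN
    have li2 := li.comp (fun j : Fin (l + d) => finSumFinEquiv.symm j)
      (Equiv.injective _)
    set L := LinearEquiv.funCongrLeft ℝ ℝ σ with hL
    have li3 := li2.map' L.toLinearMap L.ker
    have heq : (fun j : Fin (l + d) => fun c : Fin d ⊕ Fin l =>
        ((N (finSumFinEquiv.symm j) (σ c) : ℝ))) =
        (⇑L.toLinearMap ∘ fun j => fun c : Fin l ⊕ Fin d =>
          ((N (finSumFinEquiv.symm j) c : ℝ))) := by
      funext j
      rfl
    rw [heq]
    exact li3
  · -- general position
    intro c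
    have hgen' : ∀ (s : Fin l ⊕ Fin d), N s (σ c) ≠ 0 := by
      intro s
      rcases c with a | b
      · rcases s with j' | k
        · simpa [hNdef, hσ, hEdef] using (hgen a).1 j'
        · have : (0:ℤ) < (Mb : ℤ) * ((k : ℤ) + 1) ^ ((a : ℕ) + 1) := by positivity
          simp only [hNdef, hσ, hGdef]
          simp only [Equiv.sumComm_apply, Sum.swap_inl, Matrix.fromBlocks_apply₂₂,
            Matrix.of_apply]
          omega
      · rcases s with j' | k
        · have : (0:ℤ) < ((j' : ℤ) + 1) ^ ((b : ℕ) + 1) := by positivity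
          simp only [hNdef, hσ, hFdef]
          simp only [Equiv.sumComm_apply, Sum.swap_inr, Matrix.fromBlocks_apply₁₁,
            Matrix.of_apply]
          omega
        · have hp0 : (0:ℤ) < (p : ℤ) := by exact_mod_cast hpp.pos
          have : (0:ℤ) < (p : ℤ) * ((k : ℤ) + 1) ^ ((b : ℕ) + 1) := by positivity
          simp only [hNdef, hσ, hHdef]
          simp only [Equiv.sumComm_apply, Sum.swap_inr, Matrix.fromBlocks_apply₂₁,
            Matrix.of_apply]
          omega
    have hdist : ∀ (s t : Fin l ⊕ Fin d), s ≠ t → N s (σ c) ≠ N t (σ c) := by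
      -- cross inequalities
      have hEG : ∀ (j' : Fin l) (k : Fin d) (a : Fin d),
          e j' a ≠ (Mb : ℤ) * ((k : ℤ) + 1) ^ ((a : ℕ) + 1) := by
        intro j' k a hc
        have h1 : |e j' a| < (Mb : ℤ) := by
          have := hMe j' a
          rw [Int.abs_eq_natAbs]
          exact_mod_cast this
        have h2 : (Mb : ℤ) ≤ (Mb : ℤ) * ((k : ℤ) + 1) ^ ((a : ℕ) + 1) :=
          le_mul_of_one_le_right (by positivity) (aux_pow_one_le k _)
        have h3 : e j' a ≤ |e j' a| := le_abs_self _
        omega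
      have hFH : ∀ (j' : Fin l) (k : Fin d) (b : Fin l),
          ((j' : ℤ) + 1) ^ ((b : ℕ) + 1) ≠ (p : ℤ) * ((k : ℤ) + 1) ^ ((b : ℕ) + 1) := by
        intro j' k b hc
        have h1 : ((j' : ℕ) + 1) ^ ((b : ℕ) + 1) ≤ l ^ l := by
          calc ((j' : ℕ) + 1) ^ ((b : ℕ) + 1) ≤ l ^ ((b : ℕ) + 1) :=
                Nat.pow_le_pow_left j'.isLt _
            _ ≤ l ^ l := Nat.pow_le_pow_right (by have := j'.isLt; omega) b.isLt
        have h1' : ((j' : ℤ) + 1) ^ ((b : ℕ) + 1) < (p : ℤ) := by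
          have : (((j' : ℕ) + 1 : ℕ) : ℤ) ^ ((b : ℕ) + 1) ≤ ((l ^ l : ℕ) : ℤ) := by
            exact_mod_cast h1
          push_cast at this
          have hl : ((l ^ l : ℕ) : ℤ) < (p : ℤ) := by exact_mod_cast (by omega : l ^ l < p)
          push_cast at hl
          linarith
        have h2 : (p : ℤ) ≤ (p : ℤ) * ((k : ℤ) + 1) ^ ((b : ℕ) + 1) :=
          le_mul_of_one_le_right (by positivity) (aux_pow_one_le k _)
        omega
      intro s t hst
      rcases c with a | b
      · -- column inl a : entries are e _ a and G _ a
        rcases s with j1 | k1 <;> rcases t with j2 | k2 <;>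
          simp only [hNdef, hσ, hEdef, hGdef, Equiv.sumComm_apply, Sum.swap_inl,
            Matrix.fromBlocks_apply₁₂, Matrix.fromBlocks_apply₂₂, Matrix.of_apply]
        · exact (hgen a).2 j1 j2 (fun h => hst (by rw [h]))
        · exact hEG j1 k2 a
        · exact fun h => hEG j2 k1 a h.symm
        · intro hc
          exact aux_pow_ne (n := d) (fun h => hst (by rw [h])) (a : ℕ)
            (mul_left_cancel₀ (Int.natCast_ne_zero.mpr (by omega) : (Mb:ℤ) ≠ 0) hc)
      · -- column inr b : entries are F _ b and H _ b
        rcases s with j1 | k1 <;> rcases t with j2 | k2 <;>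
          simp only [hNdef, hσ, hFdef, hHdef, Equiv.sumComm_apply, Sum.swap_inr,
            Matrix.fromBlocks_apply₁₁, Matrix.fromBlocks_apply₂₁, Matrix.of_apply]
        · exact aux_pow_ne (fun h => hst (by rw [h])) (b : ℕ)
        · exact hFH j1 k2 b
        · exact fun h => hFH j2 k1 b h.symm
        · intro hc
          have hp0 : (p : ℤ) ≠ 0 := by exact_mod_cast hpp.ne_zero
          exact aux_pow_ne (n := d) (fun h => hst (by rw [h])) (b : ℕ)
            (mul_left_cancel₀ hp0 hc)
    constructor
    · intro j
      exact hgen' (finSumFinEquiv.symm j)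
    · intro j k hjk
      exact hdist _ _ (fun h => hjk (by
        have := congrArg finSumFinEquiv h
        simpa using this))
  · -- the constellation projection
    intro A B x y t ht hxy hcon
    refine ⟨hxy.1, fun i => ?_⟩
    have := (hcon (Fin.castAdd d i)).1
    have hval : ∀ c : Fin d, N (finSumFinEquiv.symm (Fin.castAdd d i)) (σ (Sum.inl c)) =
        e i c := by
      intro c
      simp [hNdef, hσ, hEdef, finSumFinEquiv_symm_apply_castAdd]
    simpa only [hval] using this
end

section
/- Define τ(e) = inf over lattice points m ∈ ℤ^{d²} with m ∉ {0, e} and points x on the segment [0, e] of the ℓ^∞ distance |m − x|_∞, where e = (e_1,...,e_d) is viewed as a point of ℤ^{d²}. Let 0 < ε < τ(e), let e be primitive (the segment from 0 to e in ℤ^{d²} contains no lattice points other than its endpoints), let N be sufficiently large, and let B = I^d ⊆ [1,N]^d be a box of side length εN. If there exist x ∈ B and t ∈ {1,...,N−1} such that x + t e_j ∈ B (mod N) componentwise for all j = 1,...,d, then either x + t e_j ∈ B in ℤ^d for all j, or x + (t−N) e_j ∈ B in ℤ^d for all j. In particular B contains a genuine constellation x + t' e ⊆ ℤ^d with t' ≠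 0. -/
open Finset Set

/-- if `e` is primitive, `0 < ε < τ(e)` and `B ⊆ [1,N]^d` is a box
of side `εN`, then any constellation `x + t e ⊆ B (mod N)` is genuine: either
`x + t e ⊆ B` or `x + (t-N) e ⊆ B` in `ℤ^d`; in particular `B` contains a
genuine constellation `x + t' e` with `t' ≠ 0`. -/
theorem mod_N_constellations_are_genuine (d : ℕ) (hd : 0 < d)
    (e : Fin d → (Fin d → ℤ))
    (hprim : ∀ (m : Fin d × Fin d → ℤ) (lam : ℝ), lam ∈ Icc (0:ℝ) 1 →
      (∀ p : Fin d × Fin d, (m p : ℝ) = lam * (e p.1 p.2 : ℝ)) →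
      (m = 0 ∨ m = fun p => e p.1 p.2))
    (tau : ℝ)
    (htau : tau = sInf {r : ℝ | ∃ (m : Fin d × Fin d → ℤ) (lam : ℝ),
      m ≠ 0 ∧ m ≠ (fun p => e p.1 p.2) ∧ lam ∈ Icc (0:ℝ) 1 ∧
      r = ⨆ p : Fin d × Fin d, |(m p : ℝ) - lam * (e p.1 p.2 : ℝ)|})
    (ε : ℝ) (hε : 0 < ε) (hετ : ε < tau) :
    ∃ N₀ : ℕ, ∀ N : ℕ, N₀ ≤ N →
      ∀ (a : Fin d → ℤ) (B : Set (Fin d → ℤ)),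
      (∀ c, 1 ≤ a c ∧ (a c : ℝ) + ε * N ≤ N) →
      (B = {y | ∀ c, (a c : ℝ) ≤ y c ∧ (y c : ℝ) ≤ (a c : ℝ) + ε * N}) →
      ∀ (x : Fin d → ℤ) (t : ℤ), 1 ≤ t → t ≤ (N : ℤ) - 1 →
      x ∈ B →
      (∀ j : Fin d, ∃ m : Fin d → ℤ,
        (fun c => x c + t * e j c - (N : ℤ) * m c) ∈ B) →
      (((∀ j : Fin d, (fun c => x c + t * e j c) ∈ B) ∨
        (∀ j : Fin d, (fun c => x c + (t - (N : ℤ)) * e j c) ∈ B)) ∧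
       (∃ t' : ℤ, t' ≠ 0 ∧ ∀ j : Fin d, (fun c => x c + t' * e j c) ∈ B)) := by

  refine ⟨1, fun N hN a B hB hBdef x t ht1 ht2 hxB hmod => ?_⟩
  classical
  subst hBdef
  choose m hm using hmod
  have hN0 : (0:ℝ) < N := by exact_mod_cast Nat.lt_of_lt_of_le Nat.zero_lt_one hN
  set lam : ℝ := (t : ℝ) / N with hlam
  have hlam01 : lam ∈ Icc (0:ℝ) 1 := by
    constructor
    · apply div_nonneg _ hN0.le
      exact_mod_cast (le_trans zero_le_one (by exact_mod_cast ht1))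
    · rw [div_le_one hN0]
      have : (t:ℝ) ≤ (N:ℝ) - 1 := by exact_mod_cast ht2
      linarith
  have hclose : ∀ j c, |(m j c : ℝ) - lam * (e j c : ℝ)| ≤ ε := by
    intro j c
    have h1 := hxB c
    have h2 := hm j c
    simp only [Set.mem_setOf_eq] at h1 h2
    push_cast at h1 h2
    have heq : (N:ℝ) * ((m j c : ℝ) - lam * (e j c : ℝ))
        = (N:ℝ) * (m j c : ℝ) - (t:ℝ) * (e j c : ℝ) := by
      rw [hlam]; field_simp
    have h3 : -(ε * N) ≤ (N:ℝ) * ((m j c : ℝ) - lam * (e j c : ℝ)) ∧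
        (N:ℝ) * ((m j c : ℝ) - lam * (e j c : ℝ)) ≤ ε * N := by
      rw [heq]
      constructor <;> linarith [h1.1, h1.2, h2.1, h2.2]
    rw [abs_le]
    constructor
    · nlinarith [h3.1, hN0]
    · nlinarith [h3.2, hN0]
  set M : Fin d × Fin d → ℤ := fun p => m p.1 p.2 with hM
  have hne : Nonempty (Fin d × Fin d) := ⟨⟨⟨0, hd⟩, ⟨0, hd⟩⟩⟩
  have hsup : (⨆ p : Fin d × Fin d, |(M p : ℝ) - lam * (e p.1 p.2 : ℝ)|) ≤ ε :=
    ciSup_le fun p => hclose p.1 p.2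
  have hMcase : M = 0 ∨ M = fun p => e p.1 p.2 := by
    by_contra hcon
    push_neg at hcon
    have hmem : (⨆ p : Fin d × Fin d, |(M p : ℝ) - lam * (e p.1 p.2 : ℝ)|) ∈
        {r : ℝ | ∃ (m : Fin d × Fin d → ℤ) (lam : ℝ),
          m ≠ 0 ∧ m ≠ (fun p => e p.1 p.2) ∧ lam ∈ Icc (0:ℝ) 1 ∧
          r = ⨆ p : Fin d × Fin d, |(m p : ℝ) - lam * (e p.1 p.2 : ℝ)|} :=
      ⟨M, lam, hcon.1, hcon.2, hlam01, rfl⟩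
    have hbdd : BddBelow {r : ℝ | ∃ (m : Fin d × Fin d → ℤ) (lam : ℝ),
          m ≠ 0 ∧ m ≠ (fun p => e p.1 p.2) ∧ lam ∈ Icc (0:ℝ) 1 ∧
          r = ⨆ p : Fin d × Fin d, |(m p : ℝ) - lam * (e p.1 p.2 : ℝ)|} := by
      refine ⟨0, fun r hr => ?_⟩
      obtain ⟨m', lam', _, _, _, rfl⟩ := hr
      exact Real.iSup_nonneg fun p => abs_nonneg _
    have := csInf_le hbdd hmem
    rw [← htau] at this
    linarith
  have key : (∀ j : Fin d, (fun c => x c + t * e j c) ∈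
        {y : Fin d → ℤ | ∀ c, (a c : ℝ) ≤ y c ∧ (y c : ℝ) ≤ (a c : ℝ) + ε * N}) ∨
      (∀ j : Fin d, (fun c => x c + (t - (N:ℤ)) * e j c) ∈
        {y : Fin d → ℤ | ∀ c, (a c : ℝ) ≤ y c ∧ (y c : ℝ) ≤ (a c : ℝ) + ε * N}) := by
    rcases hMcase with h0 | he
    · left
      intro j c
      have h2 := hm j c
      have hm0 : m j c = 0 := congrFun h0 (j, c)
      simp only [Set.mem_setOf_eq] at h2 ⊢
      rw [hm0] at h2
      push_cast at h2 ⊢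
      constructor <;> [linarith [h2.1]; linarith [h2.2]]
    · right
      intro j c
      have h2 := hm j c
      have hme : m j c = e j c := congrFun he (j, c)
      simp only [Set.mem_setOf_eq] at h2 ⊢
      rw [hme] at h2
      push_cast at h2 ⊢
      constructor <;> [nlinarith [h2.1]; nlinarith [h2.2]]
  refine ⟨key, ?_⟩
  rcases key with h | h
  · exact ⟨t, by omega, h⟩
  · exact ⟨t - N, by omega, h⟩
end

section
/- Let ν : Z_N → ℝ≥0 be a measure satisfying the (d·2^d, 2d)-linear forms condition, let μ = ν ⊗ ... ⊗ ν (d-fold tensor product) on Z_N^d, and let e = {e_1,...,e_d} be a basis of Z_N^d in general position. Then ||μ − 1||_{□(e)^d} = o(1) as N → ∞. -/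
open Finset

/-- `ν` satisfies the `(m₀,t₀)`-linear forms condition at level `δ`: every
average of `ν` over at most `m₀` pairwise linearly independent nonzero integer
linear forms in at most `t₀` variables, with arbitrary constant terms, is
within `δ` of `1`. -/
def LinearFormsConditionAt (N : ℕ) [NeZero N] (ν : ZMod N → ℝ)
    (m₀ t₀ : ℕ) (δ : ℝ) : Prop :=
  ∀ (m t : ℕ), m ≤ m₀ → t ≤ t₀ →
    ∀ (L : Fin m → Fin t → ℤ) (b : Fin m → ZMod N),
    (∀ i, (fun k => (L i k : ZMod N)) ≠ 0) →
    (∀ i j, i ≠ j → ∀ c : ZMod N,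
      (fun k => (L i k : ZMod N)) ≠ fun k => c * (L j k : ZMod N)) →
    |(∑ x : Fin t → ZMod N, ∏ i : Fin m,
        ν (∑ k : Fin t, (L i k : ZMod N) * x k + b i)) / (N : ℝ) ^ t - 1| ≤ δ

/-!
Expanding `∏_ω (μ(x + ω·t·e) - 1)` writes `‖μ - 1‖_{□(e)^d}^{2^d}` as a signed sum, over the
sets `S ⊆ {0,1}^d`, of the averages of `∏_{ω ∈ S} μ(x + ω·t·e)`, with signs summing to zero.
Such an average is an average of `ν` over the `|S|·d` linear forms `x_j + ∑_i ω_i t_i e_{ij}`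
in the `2d` variables `(x, t)`; they are pairwise independent because `e_{ij} ≠ 0`, so the
linear forms condition puts the average within `δ` of `1`, and the whole sum is at most
`2^{2^d} δ`.
-/

theorem abs_sum_prod_sub_one_div_le {α ι : Type*} [Fintype α] [Fintype ι] [DecidableEq ι]
    [Nonempty ι] (A : α → ι → ℝ) (c δ : ℝ)
    (h : ∀ S : Finset ι, |(∑ a, ∏ i ∈ S, A a i) / c - 1| ≤ δ) :
    |(∑ a, ∏ i, (A a i - 1)) / c| ≤ 2 ^ Fintype.card ι * δ := by
  have hsign : ∑ T ∈ (univ : Finset ι).powerset, (-1 : ℝ) ^ #T = 0 := by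
    exact_mod_cast Finset.sum_powerset_neg_one_pow_card_of_nonempty univ_nonempty
  have hexp : (∑ a, ∏ i, (A a i - 1)) / c =
      ∑ T ∈ (univ : Finset ι).powerset,
        (-1) ^ #T * ((∑ a, ∏ i ∈ univ \ T, A a i) / c - 1) := by
    simp only [mul_sub, sum_sub_distrib, hsign, mul_one, sub_zero, Finset.prod_sub,
      prod_const_one, sum_div, mul_sum, mul_div_assoc]
    exact sum_comm
  calc |(∑ a, ∏ i, (A a i - 1)) / c|
      ≤ ∑ T ∈ (univ : Finset ι).powerset, |(-1) ^ #T * ((∑ a, ∏ i ∈ univ \ T, A a i) / c - 1)| :=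
        hexp ▸ abs_sum_le_sum_abs _ _
    _ ≤ ∑ _T ∈ (univ : Finset ι).powerset, δ := by
        refine sum_le_sum fun T _ => ?_
        simpa using h (univ \ T)
    _ = 2 ^ Fintype.card ι * δ := by simp

section CubeForms

variable {ι J R : Type*}

def cubeVertex {V : Type*} [Fintype ι] [AddCommMonoid V] [SMul R V]
    (e : ι → V) (x : V) (t : ι → R) (ω : ι → Bool) : V :=
  x + ∑ i, if ω i then t i • e i else 0

def tensorPower [Fintype J] (ν : R → ℝ) (y : J → R) : ℝ := ∏ j, ν (y j)

/-- The coordinate `j` of `cubeVertex e x t ω`, as a linear form in the variables `(x, t)`. -/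
def cubeForm [DecidableEq J] [Zero R] [One R] (e : ι → J → R) (ω : ι → Bool) (j : J) :
    J ⊕ ι → R :=
  Sum.elim (Pi.single j 1) fun i => if ω i then e i j else 0

variable [DecidableEq J]

theorem cubeForm_ne_zero [MulZeroOneClass R] [Nontrivial R] (e : ι → J → R) (ω : ι → Bool)
    (j : J) : cubeForm e ω j ≠ 0 := fun h => by
  simpa [cubeForm] using congrFun h (Sum.inl j)

theorem eq_of_cubeForm_eq_smul [MulZeroOneClass R] [Nontrivial R] {e : ι → J → R}
    (he : ∀ i j, e i j ≠ 0) {ω ω' : ι → Bool} {j j' : J} {c : R}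
    (h : cubeForm e ω j = c • cubeForm e ω' j') : ω = ω' ∧ j = j' := by
  have hj := congrFun h (Sum.inl j)
  obtain rfl : j = j' := by
    by_contra hne
    simp [cubeForm, hne] at hj
  obtain rfl : c = 1 := by simpa [cubeForm] using hj.symm
  refine ⟨funext fun i => ?_, rfl⟩
  have hi := congrFun h (Sum.inr i)
  have := he i j
  cases hω : ω i <;> cases hω' : ω' i <;> simp_all [cubeForm]

theorem sum_cubeForm_mul [Fintype ι] [Fintype J] [CommSemiring R] (e : ι → J → R)
    (ω : ι → Bool) (j : J) (x : J → R) (t : ι → R) :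
    ∑ k, cubeForm e ω j k * Sum.elim x t k = cubeVertex e x t ω j := by
  simp [cubeForm, cubeVertex, Fintype.sum_sum_type, Finset.sum_apply, Pi.single_apply,
    apply_ite (fun v : J → R => v j), mul_comm]

end CubeForms

theorem LinearFormsConditionAt.abs_sum_prod_div_sub_one_le {N : ℕ} [NeZero N]
    {ν : ZMod N → ℝ} {m₀ t₀ : ℕ} {δ : ℝ} (H : LinearFormsConditionAt N ν m₀ t₀ δ)
    {ι κ : Type*} [Fintype ι] [Fintype κ] [DecidableEq κ] (hι : Fintype.card ι ≤ m₀)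
    (hκ : Fintype.card κ ≤ t₀) (L : ι → κ → ZMod N) (b : ι → ZMod N)
    (hL₀ : ∀ i, L i ≠ 0) (hL : ∀ i i', i ≠ i' → ∀ c : ZMod N, L i ≠ c • L i') :
    |(∑ x : κ → ZMod N, ∏ i, ν (∑ k, L i k * x k + b i)) / (N : ℝ) ^ Fintype.card κ - 1|
      ≤ δ := by
  set σ := (Fintype.equivFin ι).symm
  set τ := (Fintype.equivFin κ).symm
  have hcast : ∀ i k, (((L (σ i) (τ k)).val : ℤ) : ZMod N) = L (σ i) (τ k) := by simp
  have := H _ _ hι hκ (fun i k => (L (σ i) (τ k)).val) (b ∘ σ)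
    (fun i h => hL₀ (σ i) (funext fun k => by simpa [hcast] using congrFun h (τ.symm k)))
    (fun i i' hne c h => hL (σ i) (σ i') (σ.injective.ne hne) c
      (funext fun k => by simpa [hcast] using congrFun h (τ.symm k)))
  simp only [hcast] at this
  convert this using 4
  apply Fintype.sum_equiv (Equiv.arrowCongr τ.symm (Equiv.refl _))
  intro x
  rw [← σ.prod_comp]
  refine prod_congr rfl fun i _ => ?_
  rw [← τ.sum_comp]
  rfl

theorem LinearFormsConditionAt.abs_sum_prod_tensorPower_cubeVertex_div_sub_one_le {N : ℕ}
    [NeZero N] [Fact (1 < N)] {ν : ZMod N → ℝ} {m₀ t₀ : ℕ} {δ : ℝ}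
    (H : LinearFormsConditionAt N ν m₀ t₀ δ)
    {ι J : Type*} [Fintype ι] [DecidableEq ι] [Fintype J] [DecidableEq J]
    (hm : Fintype.card J * 2 ^ Fintype.card ι ≤ m₀) (ht : Fintype.card J + Fintype.card ι ≤ t₀)
    {e : ι → J → ZMod N} (he : ∀ i j, e i j ≠ 0) (S : Finset (ι → Bool)) :
    |(∑ p : (J → ZMod N) × (ι → ZMod N), ∏ ω ∈ S, tensorPower ν (cubeVertex e p.1 p.2 ω)) /
      (N : ℝ) ^ (Fintype.card J + Fintype.card ι) - 1| ≤ δ := by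
  have hS : Fintype.card (S × J) ≤ m₀ := by
    have : #S ≤ 2 ^ Fintype.card ι := by simpa using S.card_le_univ
    rw [Fintype.card_prod, Fintype.card_coe, mul_comm]
    exact le_trans (Nat.mul_le_mul_left _ this) hm
  have key := H.abs_sum_prod_div_sub_one_le hS (by rwa [Fintype.card_sum])
    (fun p => cubeForm e p.1 p.2) 0 (fun p => cubeForm_ne_zero e p.1 p.2)
    (fun p p' hne c h => hne <| by
      obtain ⟨hω, hj⟩ := eq_of_cubeForm_eq_smul he h
      exact Prod.ext (Subtype.ext hω) hj)
  rw [Fintype.card_sum] at key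
  convert key using 4
  apply Fintype.sum_equiv (Equiv.sumArrowEquivProdArrow J ι (ZMod N)).symm
  rintro ⟨x, t⟩
  simp only [tensorPower, Pi.zero_apply, add_zero, Fintype.prod_prod_type]
  rw [← prod_coe_sort S]
  refine prod_congr rfl fun ω _ => prod_congr rfl fun j _ => ?_
  rw [← sum_cubeForm_mul]
  rfl

/-- if `ν` satisfies the `(d·2^d, 2d)`-linear forms condition,
`μ = ν ⊗ ⋯ ⊗ ν` and `e` is a basis of `Z_N^d` in general position, then
`‖μ - 1‖_{□(e)^d} = o(1)` as `N → ∞`. -/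
theorem tensor_measure_box_norm_small (d : ℕ) :
    ∀ ε : ℝ, 0 < ε → ∃ δ : ℝ, 0 < δ ∧ ∃ N₀ : ℕ, ∀ N : ℕ, N₀ ≤ N →
    ∀ (_ : N.Prime) (_ : NeZero N) (ν : ZMod N → ℝ),
    (∀ n, 0 ≤ ν n) →
    LinearFormsConditionAt N ν (d * 2 ^ d) (2 * d) δ →
    ∀ e : Fin d → (Fin d → ZMod N),
    LinearIndependent (ZMod N) e →
    Submodule.span (ZMod N) (Set.range e) = ⊤ →
    (∀ j : Fin d, (∀ i, e i j ≠ 0) ∧ (∀ i i', i ≠ i' → e i j ≠ e i' j)) →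
    (|(∑ x : Fin d → ZMod N, ∑ t : Fin d → ZMod N,
        ∏ ω : Fin d → Bool,
          ((∏ j : Fin d, ν ((x + ∑ i : Fin d, if ω i then t i • e i else 0) j)) - 1)) /
      (N : ℝ) ^ (2 * d)|) ^ ((1 : ℝ) / 2 ^ d) ≤ ε := by
  intro ε hε
  refine ⟨(ε / 2) ^ 2 ^ d, by positivity, 0, fun N _ hN _ ν _ H e _ _ he => ?_⟩
  have : Fact (1 < N) := ⟨hN.one_lt⟩
  have hS := H.abs_sum_prod_tensorPower_cubeVertex_div_sub_one_le (ι := Fin d) (J := Fin d)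
    (by simp) (by simp [two_mul]) (fun i j => (he j).1 i)
  have hbound := abs_sum_prod_sub_one_div_le _ _ _ hS
  rw [← two_mul, Fintype.card_fun, Fintype.card_bool, Fintype.card_fin, ← mul_pow,
    mul_div_cancel₀ _ two_ne_zero, Fintype.sum_prod_type] at hbound
  calc _ ≤ (ε ^ 2 ^ d) ^ ((1 : ℝ) / 2 ^ d) :=
        Real.rpow_le_rpow (abs_nonneg _) hbound (by positivity)
    _ = ε := by
        rw [one_div]
        exact_mod_cast Real.pow_rpow_inv_natCast hε.le (pow_ne_zero d two_ne_zero)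
end

section
/- Let W ≥ 1, b coprime to W, and R ≤ N^{1/(d 2^{d+5})} with 0 < ε₁ < ε₂ < 1 and ε₁ N > R. Define Λ_R(n) = Σ_{m | n, m ≤ R} μ(m) log(R/m) (μ the Möbius function) and ν(n) = (φ(W)/W) Λ_R(Wn+b)²/log R for ε₁N ≤ n ≤ ε₂N, ν(n) = 1 otherwise. Then for N sufficiently large and every n with ε₁N ≤ n ≤ ε₂N, ν(n) ≥ d^{-1} 2^{-d-6} Λ̄_b(n), where Λ̄_b(n) = (φ(W)/W) log(Wn+b) if Wn+b is prime and 0 otherwise. -/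
open Finset ArithmeticFunction
open scoped ArithmeticFunction.Moebius

/-!
If `Wn + b` is a prime larger than `R`, its only divisor `m ≤ R` is `1`, so `Λ_R(Wn + b) = log R`
and `ν(n) = (φ(W)/W) log R`. As `Wn + b ≤ N²` and `log R = log N / (d 2^{d+5})`, this is at least
`(φ(W)/W) log(Wn + b) / (d 2^{d+6})`. Otherwise the right-hand side is `0 ≤ ν(n)`.
-/

noncomputable def truncatedVonMangoldt (R : ℝ) (n : ℕ) : ℝ :=
  ∑ m ∈ n.divisors.filter (fun m : ℕ => (m : ℝ) ≤ R), (μ m : ℝ) * Real.log (R / m)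

theorem truncatedVonMangoldt_prime {p : ℕ} (hp : p.Prime) {R : ℝ} (h1R : 1 ≤ R)
    (hRp : R < p) : truncatedVonMangoldt R p = Real.log R := by
  have hdiv : p.divisors.filter (fun m : ℕ => (m : ℝ) ≤ R) = {1} := by
    rw [hp.divisors, filter_insert, if_pos (by simpa using h1R), filter_singleton,
      if_neg hRp.not_ge]
    rfl
  simp [truncatedVonMangoldt, hdiv]

theorem log_natCast_le_mul_log_of_le_pow {m N k : ℕ} (h : m ≤ N ^ k) :
    Real.log m ≤ k * Real.log N := by
  rcases Nat.eq_zero_or_pos m with rfl | hm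
  · simpa using mul_nonneg k.cast_nonneg (Real.log_natCast_nonneg N)
  · rw [← Real.log_pow]
    exact Real.log_le_log (by exact_mod_cast hm) (by exact_mod_cast h)

theorem greentao_measure_dominates_general (d W b : ℕ) (hW : 1 ≤ W) (ε₁ ε₂ : ℝ)
    (h2 : ε₂ < 1) :
    ∃ N₀ : ℕ, ∀ N : ℕ, N₀ ≤ N → ∀ R : ℝ,
    R = (N : ℝ) ^ ((1 : ℝ) / (d * 2 ^ (d + 5))) →
    R < ε₁ * N →
    ∀ n : ℕ, ε₁ * N ≤ (n : ℝ) → (n : ℝ) ≤ ε₂ * N →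
    ((Nat.totient W : ℝ) / W) *
        (∑ m ∈ (W * n + b).divisors.filter (fun m : ℕ => (m : ℝ) ≤ R),
            (μ m : ℝ) * Real.log (R / m)) ^ 2 / Real.log R
    ≥ ((1 : ℝ) / (d * 2 ^ (d + 6))) *
        (if (W * n + b).Prime then
          ((Nat.totient W : ℝ) / W) * Real.log (W * n + b) else 0) := by
  refine ⟨W + b + 1, fun N hN R hR hRN n hn1 hn2 => ?_⟩
  change _ * truncatedVonMangoldt R (W * n + b) ^ 2 / _ ≥ _
  have hN1 : (1 : ℝ) ≤ N := by exact_mod_cast (by omega : 1 ≤ N)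
  have h1R : 1 ≤ R := hR ▸ Real.one_le_rpow hN1 (by positivity)
  split_ifs with hp
  · have hnN : n ≤ N := Nat.cast_le.1 (hn2.trans (mul_le_of_le_one_left (by positivity) h2.le))
    have hRp : R < (W * n + b : ℕ) := by
      push_cast
      nlinarith [(Nat.one_le_cast (α := ℝ)).2 hW, (b.cast_nonneg : (0 : ℝ) ≤ b)]
    have hlogR : Real.log R = 1 / (d * 2 ^ (d + 5)) * Real.log N := by
      rw [hR, Real.log_rpow (by positivity)]
    have hlog : Real.log (W * n + b) ≤ 2 * Real.log N := by
      exact_mod_cast log_natCast_le_mul_log_of_le_pow (k := 2) (by nlinarith)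
    have key : 1 / (d * 2 ^ (d + 6) : ℝ) * Real.log (W * n + b) ≤ Real.log R := by
      calc 1 / (d * 2 ^ (d + 6) : ℝ) * Real.log (W * n + b)
          ≤ 1 / (d * 2 ^ (d + 6) : ℝ) * (2 * Real.log N) := by gcongr
        _ = Real.log R := by rw [hlogR]; ring
    rw [truncatedVonMangoldt_prime hp h1R hRp, sq, mul_div_assoc, mul_self_div_self, ge_iff_le,
      mul_left_comm]
    gcongr
  · rw [mul_zero]
    exact div_nonneg (by positivity) (Real.log_nonneg h1R)

/-- with `R = N^{1/(d·2^{d+5})}`, `ε₁N > R` and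
`Λ_R(n) = Σ_{m|n, m ≤ R} μ(m) log(R/m)`, for `N` sufficiently large and every
`n` with `ε₁N ≤ n ≤ ε₂N`, the Green–Tao measure value
`ν(n) = (φ(W)/W)·Λ_R(Wn+b)²/log R` satisfies `ν(n) ≥ d⁻¹2^{-d-6} Λ̄_b(n)`,
where `Λ̄_b(n) = (φ(W)/W)·log(Wn+b)` if `Wn+b` is prime and `0` otherwise. -/
theorem greentao_measure_dominates (d W b : ℕ) (hd : 0 < d) (hW : 1 ≤ W)
    (hb : Nat.Coprime b W) (ε₁ ε₂ : ℝ) (h1 : 0 < ε₁) (h12 : ε₁ < ε₂)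
    (h2 : ε₂ < 1) :
    ∃ N₀ : ℕ, ∀ N : ℕ, N₀ ≤ N → ∀ R : ℝ,
    R = (N : ℝ) ^ ((1 : ℝ) / (d * 2 ^ (d + 5))) →
    R < ε₁ * N →
    ∀ n : ℕ, ε₁ * N ≤ (n : ℝ) → (n : ℝ) ≤ ε₂ * N →
    ((Nat.totient W : ℝ) / W) *
        (∑ m ∈ (W * n + b).divisors.filter (fun m : ℕ => (m : ℝ) ≤ R),
            (μ m : ℝ) * Real.log (R / m)) ^ 2 / Real.log R
    ≥ ((1 : ℝ) / (d * 2 ^ (d + 6))) *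
        (if (W * n + b).Prime then
          ((Nat.totient W : ℝ) / W) * Real.log (W * n + b) else 0) :=
  greentao_measure_dominates_general d W b hW ε₁ ε₂ h2
end
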